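/- Let Π₀ be the probability distribution on nonempty binary trees given by Π₀(t) = 4^{−n(t)}. Then: (i) for every j ≥ 0, Π₀({t : N_1(t) = j}) = ν(j); and (ii) for every k ≥ 1 and all nonnegative integers n₁, …, n_k, j, one has Π₀({t : N_{k+1}(t) = j} ∩ ⋂_{i=1}^{k} {t : N_i(t) = n_i}) = f_{n_k}(j) · Π₀(⋂_{i=1}^{k} {t : N_i(t) = n_i}). (This expresses that (N_k)_{k≥1} is a Galton–Watson process with offspring distribution ν under Π₀.) -/

import Mathlib

open scoped BigOperators

namespace VEP

/-- Whether a binary tree is nonempty (a node). -/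
def isNode : BinaryTree Unit → Bool
  | BinaryTree.nil => false
  | BinaryTree.node _ _ _ => true

/-- Number of vertices of `t` with label `a`, when the root of `t` carries label `c`
(labels decrease by 1 to the left child and increase by 1 to the right). -/
def countLabel : ℤ → ℤ → BinaryTree Unit → ℕ
  | _, _, BinaryTree.nil => 0
  | c, a, BinaryTree.node _ l r =>
      (if c = a then 1 else 0) + countLabel (c - 1) a l + countLabel (c + 1) a r

/-- Number of vertices of `t` with label `≥ 1`, root labelled `c`. -/
def countGeOne : ℤ → BinaryTree Unit → ℕ
  | _, BinaryTree.nil => 0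
  | c, BinaryTree.node _ l r =>
      (if 1 ≤ c then 1 else 0) + countGeOne (c - 1) l + countGeOne (c + 1) r

/-- Auxiliary predicate for binary excursions: in a tree whose root is labelled `c`,
all labels are nonnegative and every vertex labelled `0` is a leaf. -/
def excOK : ℤ → BinaryTree Unit → Prop
  | _, BinaryTree.nil => True
  | c, BinaryTree.node _ l r =>
      0 ≤ c ∧ (c = 0 → l = BinaryTree.nil ∧ r = BinaryTree.nil) ∧ excOK (c - 1) l ∧ excOK (c + 1) r

/-- A binary excursion: a nonempty binary tree rooted at label `1`, with nonnegative labels,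
whose vertices labelled `0` are leaves. -/
def IsExc (t : BinaryTree Unit) : Prop := t ≠ BinaryTree.nil ∧ excOK 1 t

/-- `n_τ`: number of vertices labelled `0` of a binary excursion. -/
def nZero (t : BinaryTree Unit) : ℕ := countLabel 1 0 t

/-- `Π⁺(τ) = 4^{-k(τ)}` where `k(τ)` is the number of vertices of `τ` with label `≥ 1`. -/
noncomputable def Piplus (t : BinaryTree Unit) : ℝ := (1 / 4 : ℝ) ^ countGeOne 1 t

/-- `ν(j)`: total `Π⁺`-weight of binary excursions with exactly `j` vertices labelled `0`. -/
noncomputable def nu (j : ℕ) : ℝ :=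
  ∑' τ : {t : BinaryTree Unit // IsExc t ∧ nZero t = j}, Piplus τ.1

/-- The weight `4^{-n(t)}` of a nonempty binary tree (and `0` for the empty tree). -/
noncomputable def weight (t : BinaryTree Unit) : ℝ :=
  if isNode t then (1 / 4 : ℝ) ^ t.numNodes else 0

/-- The probability `Π₀(S)` of a set of (nonempty) binary trees. -/
noncomputable def Pi0 (S : Set (BinaryTree Unit)) : ℝ := ∑' t : S, weight t

/-- Number of first hitting points of label `a` in `t` (vertices labelled `a` with no strict
ancestor labelled `a`), root labelled `c`. -/
def firstHit : ℤ → ℤ → BinaryTree Unit → ℕ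
  | _, _, BinaryTree.nil => 0
  | c, a, BinaryTree.node _ l r =>
      if c = a then 1 else firstHit (c - 1) a l + firstHit (c + 1) a r

/-- `N_k(t)`: number of first hitting points of label `k` in `t` (root labelled `0`). -/
def Nhit (k : ℕ) (t : BinaryTree Unit) : ℕ := firstHit 0 (k : ℤ) t

/-- `f_r`: the `r`-fold convolution power of `ν`. -/
noncomputable def f : ℕ → ℕ → ℝ
  | 0 => fun l => if l = 0 then 1 else 0
  | r + 1 => fun l => ∑ j ∈ Finset.range (l + 1), nu j * f r (l - j)

/-! ### Splitting a tree at the first hitting points of level `c` -/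

def splitT : ℕ → BinaryTree Unit → BinaryTree Unit
  | _, BinaryTree.nil => BinaryTree.nil
  | 0, BinaryTree.node _ _ _ => BinaryTree.node () BinaryTree.nil BinaryTree.nil
  | d+1, BinaryTree.node _ l r => BinaryTree.node () (splitT d r) (splitT (d+2) l)

def splitL : ℕ → BinaryTree Unit → List (BinaryTree Unit × BinaryTree Unit)
  | _, BinaryTree.nil => []
  | 0, BinaryTree.node _ l r => [(l, r)]
  | d+1, BinaryTree.node _ l r => splitL (d+2) l ++ splitL d r

def joinT : ℕ → BinaryTree Unit → List (BinaryTree Unit × BinaryTree Unit) → BinaryTree Unit × List (BinaryTree Unit × BinaryTree Unit)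
  | _, BinaryTree.nil, L => (BinaryTree.nil, L)
  | 0, BinaryTree.node _ _ _, [] => (BinaryTree.nil, [])
  | 0, BinaryTree.node _ _ _, p :: L => (BinaryTree.node () p.1 p.2, L)
  | c+1, BinaryTree.node _ A B, L =>
      let x := joinT (c+2) B L
      let y := joinT c A x.2
      (BinaryTree.node () x.1 y.1, y.2)

lemma splitT_eq_nil_iff (c : ℕ) (t : BinaryTree Unit) : splitT c t = BinaryTree.nil ↔ t = BinaryTree.nil := by
  cases t with
  | nil => simp [splitT]
  | node v l r => cases c <;> simp [splitT]

lemma excOK_splitT : ∀ (t : BinaryTree Unit) (c : ℕ), excOK (c : ℤ) (splitT c t)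
  | BinaryTree.nil, c => by simp [splitT, excOK]
  | BinaryTree.node v l r, 0 => by simp [splitT, excOK]
  | BinaryTree.node v l r, c+1 => by
      have h1 := excOK_splitT r c
      have h2 := excOK_splitT l (c+2)
      simp only [splitT, excOK]
      refine ⟨by positivity, by omega, ?_, ?_⟩
      · convert h1 using 2 <;> (push_cast; ring)
      · convert h2 using 2 <;> (push_cast; ring)

lemma splitL_length : ∀ (t : BinaryTree Unit) (c : ℕ),
    (splitL c t).length = countLabel (c : ℤ) 0 (splitT c t)
  | BinaryTree.nil, c => by simp [splitL, splitT, countLabel]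
  | BinaryTree.node v l r, 0 => by simp [splitL, splitT, countLabel]
  | BinaryTree.node v l r, c+1 => by
      have h1 := splitL_length r c
      have h2 := splitL_length l (c+2)
      simp only [splitL, splitT, countLabel, List.length_append]
      push_cast
      have e1 : (c : ℤ) + 1 - 1 = (c : ℤ) := by ring
      have e2 : (c : ℤ) + 1 + 1 = (c : ℤ) + 2 := by ring
      rw [e1, e2]
      push_cast at h2
      rw [h1, h2]
      have hne : ¬ ((c : ℤ) + 1 = 0) := by omega
      simp [hne]
      omega

lemma joinT_splitT : ∀ (t : BinaryTree Unit) (c : ℕ) (M : List (BinaryTree Unit × BinaryTree Unit)),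
    joinT c (splitT c t) (splitL c t ++ M) = (t, M)
  | BinaryTree.nil, c, M => by simp [splitT, splitL, joinT]
  | BinaryTree.node v l r, 0, M => by simp [splitT, splitL, joinT]
  | BinaryTree.node v l r, c+1, M => by
      have h1 := joinT_splitT l (c+2) (splitL c r ++ M)
      have h2 := joinT_splitT r c M
      simp only [splitT, splitL, joinT, List.append_assoc]
      rw [h1]
      simp only [h2]

lemma countLabel_node_succ (v : Unit) (A B : BinaryTree Unit) (c : ℕ) :
    countLabel ((c+1 : ℕ) : ℤ) 0 (BinaryTree.node v A B)
      = countLabel ((c+2 : ℕ) : ℤ) 0 B + countLabel (c : ℤ) 0 A := by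
  have hne : ¬ (((c : ℤ) + 1) = 0) := by omega
  simp only [countLabel]
  push_cast
  have e1 : (c : ℤ) + 1 - 1 = (c : ℤ) := by ring
  have e2 : (c : ℤ) + 1 + 1 = (c : ℤ) + 2 := by ring
  rw [e1, e2]
  simp [hne]; omega

lemma splitT_joinT : ∀ (τ : BinaryTree Unit) (c : ℕ) (L : List (BinaryTree Unit × BinaryTree Unit)),
    excOK (c : ℤ) τ → countLabel (c : ℤ) 0 τ ≤ L.length →
    splitT c (joinT c τ L).1 = τ ∧
    splitL c (joinT c τ L).1 = L.take (countLabel (c : ℤ) 0 τ) ∧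
    (joinT c τ L).2 = L.drop (countLabel (c : ℤ) 0 τ)
  | BinaryTree.nil, c, L, _, _ => by simp [joinT, splitT, splitL, countLabel]
  | BinaryTree.node v A B, 0, L, hOK, hlen => by
      obtain ⟨-, h0, -, -⟩ := hOK
      obtain ⟨hA, hB⟩ := h0 (by norm_num)
      subst hA; subst hB
      have hz : countLabel ((0:ℕ) : ℤ) 0 (BinaryTree.node v BinaryTree.nil BinaryTree.nil) = 1 := by
        simp [countLabel]
      rw [hz] at hlen ⊢
      match L with
      | [] => simp at hlen
      | p :: L' => simp [joinT, splitT, splitL]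
  | BinaryTree.node v A B, c+1, L, hOK, hlen => by
      obtain ⟨-, -, hA, hB⟩ := hOK
      have e1 : ((c+1 : ℕ) : ℤ) - 1 = (c : ℤ) := by push_cast; ring
      have e2 : ((c+1 : ℕ) : ℤ) + 1 = ((c + 2 : ℕ) : ℤ) := by push_cast; ring
      rw [e1] at hA; rw [e2] at hB
      have hz := countLabel_node_succ v A B c
      rw [hz] at hlen ⊢
      obtain ⟨hB1, hB2, hB3⟩ := splitT_joinT B (c+2) L hB (by omega)
      obtain ⟨hA1, hA2, hA3⟩ := splitT_joinT A c (joinT (c+2) B L).2 hA (by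
        rw [hB3, List.length_drop]; omega)
      simp only [joinT, splitT, splitL]
      refine ⟨?_, ?_, ?_⟩
      · rw [hA1, hB1]
      · rw [hA2, hB2, hB3, ← List.take_add]
      · rw [hA3, hB3, List.drop_drop]

/-! ### Counting lemmas, ℕ-indexed versions -/

/-- First hits of a label `s` above the root. -/
def fhD : ℕ → BinaryTree Unit → ℕ
  | _, BinaryTree.nil => 0
  | 0, BinaryTree.node _ _ _ => 1
  | s+1, BinaryTree.node _ l r => fhD (s+2) l + fhD s r

/-- First hits of a label `s` below the root. -/
def fhU : ℕ → BinaryTree Unit → ℕ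
  | _, BinaryTree.nil => 0
  | 0, BinaryTree.node _ _ _ => 1
  | s+1, BinaryTree.node _ l r => fhU s l + fhU (s+2) r

lemma firstHit_eq_fhD : ∀ (t : BinaryTree Unit) (c a : ℤ), c ≤ a →
    firstHit c a t = fhD (a - c).toNat t
  | BinaryTree.nil, _, _, _ => by simp [firstHit, fhD]
  | BinaryTree.node v l r, c, a, hca => by
      by_cases h : c = a
      · subst h
        simp [firstHit, fhD]
      · have h1 := firstHit_eq_fhD l (c - 1) a (by omega)
        have h2 := firstHit_eq_fhD r (c + 1) a (by omega)
        obtain ⟨s, hs⟩ : ∃ s : ℕ, (a - c).toNat = s + 1 := ⟨(a - c).toNat - 1, by omega⟩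
        have e1 : (a - (c - 1)).toNat = s + 2 := by omega
        have e2 : (a - (c + 1)).toNat = s := by omega
        rw [e1] at h1; rw [e2] at h2
        simp only [firstHit, if_neg h, h1, h2, hs, fhD]

lemma firstHit_eq_fhU : ∀ (t : BinaryTree Unit) (c a : ℤ), a ≤ c →
    firstHit c a t = fhU (c - a).toNat t
  | BinaryTree.nil, _, _, _ => by simp [firstHit, fhU]
  | BinaryTree.node v l r, c, a, hca => by
      by_cases h : c = a
      · subst h
        simp [firstHit, fhU]
      · have h1 := firstHit_eq_fhU l (c - 1) a (by omega)
        have h2 := firstHit_eq_fhU r (c + 1) a (by omega)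
        obtain ⟨s, hs⟩ : ∃ s : ℕ, (c - a).toNat = s + 1 := ⟨(c - a).toNat - 1, by omega⟩
        have e1 : ((c - 1) - a).toNat = s := by omega
        have e2 : ((c + 1) - a).toNat = s + 2 := by omega
        rw [e1] at h1; rw [e2] at h2
        simp only [firstHit, if_neg h, h1, h2, hs, fhU]

lemma Nhit_eq_fhD (k : ℕ) (t : BinaryTree Unit) : Nhit k t = fhD k t := by
  have := firstHit_eq_fhD t 0 (k : ℤ) (by positivity)
  simpa [Nhit] using this

lemma fhD_eq_fhU_splitT : ∀ (t : BinaryTree Unit) (d s : ℕ), 1 ≤ s → s ≤ d →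
    fhD s t = fhU s (splitT d t)
  | BinaryTree.nil, d, s, _, _ => by simp [splitT, fhD, fhU]
  | BinaryTree.node v l r, d, s, hs, hsd => by
      obtain ⟨d', rfl⟩ : ∃ d', d = d' + 1 := ⟨d - 1, by omega⟩
      obtain ⟨s', rfl⟩ : ∃ s', s = s' + 1 := ⟨s - 1, by omega⟩
      have hL := fhD_eq_fhU_splitT l (d' + 2) (s' + 2) (by omega) (by omega)
      simp only [splitT, fhD, fhU]
      rw [hL]
      by_cases h1 : s' = 0
      · subst h1
        have : fhD 0 r = fhU 0 (splitT d' r) := by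
          cases hr : r with
          | nil => simp [splitT, fhD, fhU]
          | node a b c =>
              have : splitT d' (BinaryTree.node a b c) ≠ BinaryTree.nil := by
                rw [Ne, splitT_eq_nil_iff]; simp
              cases hh : splitT d' (BinaryTree.node a b c) with
              | nil => exact absurd hh this
              | node x y z => simp [fhD, fhU]
        rw [this]; omega
      · have hR := fhD_eq_fhU_splitT r d' s' (by omega) (by omega)
        rw [hR]; omega

def gN (p : BinaryTree Unit × BinaryTree Unit) : ℕ := fhD 2 p.1 + fhD 0 p.2

lemma Nhit_one_node (v : Unit) (l r : BinaryTree Unit) : Nhit 1 (BinaryTree.node v l r) = gN (l, r) := by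
  rw [Nhit_eq_fhD]
  simp [fhD, gN]

lemma fhD_splitL : ∀ (t : BinaryTree Unit) (d : ℕ),
    fhD (d + 1) t = ((splitL d t).map gN).sum
  | BinaryTree.nil, d => by simp [splitL, fhD]
  | BinaryTree.node v l r, 0 => by simp [splitL, fhD, gN]
  | BinaryTree.node v l r, d+1 => by
      have h1 := fhD_splitL l (d + 2)
      have h2 := fhD_splitL r d
      simp only [splitL, List.map_append, List.sum_append, fhD]
      rw [h1, h2]

lemma excOK_fhU : ∀ (τ : BinaryTree Unit) (c : ℕ), excOK (c : ℤ) τ →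
    fhU c τ = countLabel (c : ℤ) 0 τ
  | BinaryTree.nil, _, _ => by simp [fhU, countLabel]
  | BinaryTree.node v l r, 0, hOK => by
      obtain ⟨-, h0, -, -⟩ := hOK
      obtain ⟨rfl, rfl⟩ := h0 (by norm_num)
      simp [fhU, countLabel]
  | BinaryTree.node v l r, c+1, hOK => by
      obtain ⟨-, -, hl, hr⟩ := hOK
      have e1 : ((c+1 : ℕ) : ℤ) - 1 = (c : ℤ) := by push_cast; ring
      have e2 : ((c+1 : ℕ) : ℤ) + 1 = ((c + 2 : ℕ) : ℤ) := by push_cast; ring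
      rw [e1] at hl; rw [e2] at hr
      have h1 := excOK_fhU l c hl
      have h2 := excOK_fhU r (c + 2) hr
      rw [countLabel_node_succ]
      simp only [fhU, h1, h2]
      omega

lemma numNodes_splitT : ∀ (t : BinaryTree Unit) (d : ℕ),
    t.numNodes = countGeOne (d : ℤ) (splitT d t) + (splitL d t).length
      + ((splitL d t).map (fun p => p.1.numNodes + p.2.numNodes)).sum
  | BinaryTree.nil, d => by simp [splitT, splitL, countGeOne, BinaryTree.numNodes]
  | BinaryTree.node v l r, 0 => by
      simp [splitT, splitL, countGeOne, BinaryTree.numNodes]; omega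
  | BinaryTree.node v l r, d+1 => by
      have h1 := numNodes_splitT l (d + 2)
      have h2 := numNodes_splitT r d
      simp only [splitT, splitL, countGeOne, BinaryTree.numNodes, List.length_append,
        List.map_append, List.sum_append]
      have e1 : ((d + 1 : ℕ) : ℤ) - 1 = (d : ℤ) := by push_cast; ring
      have e2 : ((d + 1 : ℕ) : ℤ) + 1 = ((d + 2 : ℕ) : ℤ) := by push_cast; ring
      rw [e1, e2]
      have hp : (1 : ℤ) ≤ ((d + 1 : ℕ) : ℤ) := by push_cast; omega
      rw [if_pos hp]
      omega

/-! ### ENNReal weights -/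

open scoped ENNReal

noncomputable def wE (t : BinaryTree Unit) : ℝ≥0∞ := (1/4 : ℝ≥0∞) ^ t.numNodes

noncomputable def weightE (t : BinaryTree Unit) : ℝ≥0∞ := if isNode t then wE t else 0

noncomputable def qE (p : BinaryTree Unit × BinaryTree Unit) : ℝ≥0∞ := (1/4 : ℝ≥0∞) * wE p.1 * wE p.2

noncomputable def LW (L : List (BinaryTree Unit × BinaryTree Unit)) : ℝ≥0∞ := (L.map qE).prod

noncomputable def PiE (c : ℤ) (τ : BinaryTree Unit) : ℝ≥0∞ := (1/4 : ℝ≥0∞) ^ countGeOne c τ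

lemma quarter_ne_top : (1/4 : ℝ≥0∞) ≠ ⊤ := by norm_num

lemma wE_ne_top (t : BinaryTree Unit) : wE t ≠ ⊤ := by
  simp only [wE]
  exact ENNReal.pow_ne_top (by norm_num)

lemma weightE_ne_top (t : BinaryTree Unit) : weightE t ≠ ⊤ := by
  unfold weightE; split
  · exact wE_ne_top t
  · exact ENNReal.zero_ne_top

lemma wE_node (v : Unit) (l r : BinaryTree Unit) :
    wE (BinaryTree.node v l r) = qE (l, r) := by
  have : (BinaryTree.node v l r).numNodes = l.numNodes + r.numNodes + 1 := rfl
  simp only [wE, qE, this, pow_add, pow_one]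
  ring

/-- Trees are `Option` of pairs of trees. -/
def treeOpt : BinaryTree Unit ≃ Option (BinaryTree Unit × BinaryTree Unit) where
  toFun t := match t with
    | BinaryTree.nil => none
    | BinaryTree.node _ l r => some (l, r)
  invFun o := match o with
    | none => BinaryTree.nil
    | some p => BinaryTree.node () p.1 p.2
  left_inv t := by cases t with
    | nil => rfl
    | node v l r => rfl
  right_inv o := by cases o with
    | none => rfl
    | some p => rfl

lemma node_injective : Function.Injective (fun p : BinaryTree Unit × BinaryTree Unit => BinaryTree.node () p.1 p.2) := by
  intro a b h
  simp only [BinaryTree.node.injEq, true_and] at h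
  exact Prod.ext h.1 h.2

lemma tsum_tree (F : BinaryTree Unit → ℝ≥0∞) :
    ∑' t : BinaryTree Unit, F t = F BinaryTree.nil + ∑' p : BinaryTree Unit × BinaryTree Unit, F (BinaryTree.node () p.1 p.2) := by
  rw [ENNReal.tsum_eq_add_tsum_ite BinaryTree.nil]
  congr 1
  have hsupp : Function.support (fun t => if t = BinaryTree.nil then 0 else F t)
      ⊆ Set.range (fun p : BinaryTree Unit × BinaryTree Unit => BinaryTree.node () p.1 p.2) := by
    intro t ht
    simp only [Function.mem_support] at ht
    cases t with
    | nil => simp at ht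
    | node v l r => exact ⟨(l, r), rfl⟩
  have h := node_injective.tsum_eq (f := fun t => if t = BinaryTree.nil then 0 else F t) hsupp
  refine Eq.trans (b := ∑' (x : BinaryTree Unit), (if x = BinaryTree.nil then (0:ℝ≥0∞) else F x))
    (tsum_congr (fun b => by split_ifs <;> rfl)) ?_
  rw [← h]
  exact tsum_congr fun p => by simp

/-- Finite sums of `wE` over trees with at most `n` nodes are at most `2`. -/
lemma sum_wE_le : ∀ (n : ℕ) (s : Finset (BinaryTree Unit)), (∀ t ∈ s, t.numNodes ≤ n) →
    ∑ t ∈ s, wE t ≤ 2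
  | 0, s, hs => by
      have hsub : s ⊆ {BinaryTree.nil} := by
        intro t ht
        have := hs t ht
        cases t with
        | nil => simp
        | node v l r => simp [BinaryTree.numNodes] at this
      calc ∑ t ∈ s, wE t ≤ ∑ t ∈ ({BinaryTree.nil} : Finset (BinaryTree Unit)), wE t :=
            Finset.sum_le_sum_of_subset hsub
        _ = 1 := by simp [wE, BinaryTree.numNodes]
        _ ≤ 2 := by norm_num
  | n+1, s, hs => by
      classical
      have hsplit : s = s.filter (· = BinaryTree.nil) ∪ s.filter (· ≠ BinaryTree.nil) :=
        (Finset.filter_union_filter_not_eq _ s).symm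
      rw [hsplit, Finset.sum_union (Finset.disjoint_filter_filter_not s s _)]
      have h1 : ∑ t ∈ s.filter (· = BinaryTree.nil), wE t ≤ 1 := by
        have : s.filter (· = BinaryTree.nil) ⊆ {BinaryTree.nil} := by
          intro t ht
          simp only [Finset.mem_filter] at ht
          simp [ht.2]
        calc ∑ t ∈ s.filter (· = BinaryTree.nil), wE t
            ≤ ∑ t ∈ ({BinaryTree.nil} : Finset (BinaryTree Unit)), wE t := Finset.sum_le_sum_of_subset this
          _ = 1 := by simp [wE, BinaryTree.numNodes]
      have h2 : ∑ t ∈ s.filter (· ≠ BinaryTree.nil), wE t ≤ 1 := by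
        set sn := s.filter (· ≠ BinaryTree.nil) with hsn
        have hinj : Set.InjOn (treeOpt : BinaryTree Unit → Option (BinaryTree Unit × BinaryTree Unit)) sn :=
          fun a _ b _ h => treeOpt.injective h
        set P : Finset (BinaryTree Unit × BinaryTree Unit) :=
          sn.image (fun t => ((treeOpt t).getD (BinaryTree.nil, BinaryTree.nil))) with hP
        have himg : ∀ t ∈ sn, (treeOpt t).getD (BinaryTree.nil, BinaryTree.nil) ∈ P := by
          intro t ht; exact Finset.mem_image_of_mem _ ht
        have hinj2 : Set.InjOn (fun t => ((treeOpt t).getD (BinaryTree.nil, BinaryTree.nil))) sn := by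
          intro a ha b hb h
          simp only [hsn, Finset.coe_filter, Set.mem_setOf_eq] at ha hb
          cases a with
          | nil => exact absurd rfl ha.2
          | node va la ra => cases b with
            | nil => exact absurd rfl hb.2
            | node vb lb rb => simp [treeOpt] at h; simp [h.1, h.2]
        have hsum : ∑ t ∈ sn, wE t = ∑ p ∈ P, (1/4 : ℝ≥0∞) * wE p.1 * wE p.2 := by
          rw [hP, Finset.sum_image (fun a ha b hb h => hinj2 ha hb h)]
          apply Finset.sum_congr rfl
          intro t ht
          simp only [hsn, Finset.mem_filter] at ht
          cases t with
          | nil => exact absurd rfl ht.2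
          | node v l r =>
              have := wE_node v l r
              simp only [treeOpt, Option.getD] at *
              simpa [qE] using this
        have hA : ∀ p ∈ P, p.1.numNodes ≤ n ∧ p.2.numNodes ≤ n := by
          intro p hp
          rw [hP] at hp
          simp only [Finset.mem_image] at hp
          obtain ⟨t, ht, rfl⟩ := hp
          simp only [hsn, Finset.mem_filter] at ht
          cases t with
          | nil => exact absurd rfl ht.2
          | node v l r =>
              have hle := hs _ ht.1
              have hn : (BinaryTree.node v l r).numNodes = l.numNodes + r.numNodes + 1 := rfl
              rw [hn] at hle
              exact ⟨show l.numNodes ≤ n by omega, show r.numNodes ≤ n by omega⟩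
        have hsub : P ⊆ (P.image Prod.fst) ×ˢ (P.image Prod.snd) := by
          intro p hp
          simp only [Finset.mem_product, Finset.mem_image]
          exact ⟨⟨p, hp, rfl⟩, ⟨p, hp, rfl⟩⟩
        have hbound : ∑ p ∈ P, (1/4 : ℝ≥0∞) * wE p.1 * wE p.2 ≤ 1 := by
          calc ∑ p ∈ P, (1/4 : ℝ≥0∞) * wE p.1 * wE p.2
              ≤ ∑ p ∈ (P.image Prod.fst) ×ˢ (P.image Prod.snd), (1/4 : ℝ≥0∞) * wE p.1 * wE p.2 :=
                Finset.sum_le_sum_of_subset hsub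
            _ = (1/4 : ℝ≥0∞) * ((∑ a ∈ P.image Prod.fst, wE a) * (∑ b ∈ P.image Prod.snd, wE b)) := by
                rw [Finset.sum_mul_sum]
                rw [Finset.sum_product]
                rw [Finset.mul_sum]
                apply Finset.sum_congr rfl
                intro a _
                rw [Finset.mul_sum]
                apply Finset.sum_congr rfl
                intro b _
                ring
            _ ≤ (1/4 : ℝ≥0∞) * (2 * 2) := by
                gcongr
                · apply sum_wE_le n
                  intro a ha
                  simp only [Finset.mem_image] at ha
                  obtain ⟨p, hp, rfl⟩ := ha
                  exact (hA p hp).1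
                · apply sum_wE_le n
                  intro b hb
                  simp only [Finset.mem_image] at hb
                  obtain ⟨p, hp, rfl⟩ := hb
                  exact (hA p hp).2
            _ = 1 := by
                rw [show ((2:ℝ≥0∞) * 2) = 4 by norm_num, one_div]
                exact ENNReal.inv_mul_cancel (by norm_num) (by norm_num)
        rw [hsum]; exact hbound
      calc _ ≤ (1 : ℝ≥0∞) + 1 := add_le_add h1 h2
        _ = 2 := by norm_num

lemma tsum_wE_le_two : ∑' t : BinaryTree Unit, wE t ≤ 2 := by
  rw [ENNReal.tsum_eq_iSup_sum]
  apply iSup_le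
  intro s
  exact sum_wE_le (s.sup BinaryTree.numNodes) s (fun t ht => Finset.le_sup ht)

lemma tsum_qE_aux : ∑' p : BinaryTree Unit × BinaryTree Unit, qE p
    = (1/4 : ℝ≥0∞) * (∑' t : BinaryTree Unit, wE t) * (∑' t : BinaryTree Unit, wE t) := by
  rw [ENNReal.tsum_prod']
  have h1 : ∀ a : BinaryTree Unit, (∑' b : BinaryTree Unit, qE (a, b))
      = ((1/4 : ℝ≥0∞) * wE a) * ∑' b, wE b := by
    intro a
    simp only [qE]
    exact ENNReal.tsum_mul_left
  rw [tsum_congr h1, ENNReal.tsum_mul_right, ENNReal.tsum_mul_left]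

lemma tsum_wE : ∑' t : BinaryTree Unit, wE t = 2 := by
  set T := ∑' t : BinaryTree Unit, wE t with hT
  have hle : T ≤ 2 := tsum_wE_le_two
  have hfin : T ≠ ⊤ := (lt_of_le_of_lt hle (by norm_num)).ne
  have heq : T = 1 + (1/4) * T * T := by
    conv_lhs => rw [hT, tsum_tree wE]
    have h2 : ∀ p : BinaryTree Unit × BinaryTree Unit, wE (BinaryTree.node () p.1 p.2) = qE p :=
      fun p => wE_node () p.1 p.2
    rw [tsum_congr h2, tsum_qE_aux, ← hT]
    congr 1
    simp [wE, BinaryTree.numNodes]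
  -- solve for T in the reals
  have hx : T.toReal = 1 + (1/4) * T.toReal * T.toReal := by
    conv_lhs => rw [heq]
    rw [ENNReal.toReal_add (by norm_num) (by
      exact ENNReal.mul_ne_top (ENNReal.mul_ne_top (by norm_num) hfin) hfin)]
    rw [ENNReal.toReal_mul, ENNReal.toReal_mul]
    norm_num
  have hxle : T.toReal ≤ 2 := by
    have := ENNReal.toReal_mono (by norm_num : (2:ℝ≥0∞) ≠ ⊤) hle
    simpa using this
  have : T.toReal = 2 := by nlinarith [sq_nonneg (T.toReal - 2)]
  rw [← ENNReal.ofReal_toReal hfin, this]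
  norm_num

lemma tsum_qE : ∑' p : BinaryTree Unit × BinaryTree Unit, qE p = 1 := by
  rw [tsum_qE_aux, tsum_wE]
  rw [show ((1/4:ℝ≥0∞) * 2 * 2) = (1/4) * 4 by ring_nf, one_div]
  exact ENNReal.inv_mul_cancel (by norm_num) (by norm_num)

/-! ### The offspring distribution and its convolution powers, ENNReal versions -/

noncomputable def nuE (j : ℕ) : ℝ≥0∞ :=
  ∑' p : {p : BinaryTree Unit × BinaryTree Unit // gN p = j}, qE p.1

noncomputable def fE : ℕ → ℕ → ℝ≥0∞
  | 0 => fun l => if l = 0 then 1 else 0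
  | r + 1 => fun l => ∑ j ∈ Finset.range (l + 1), nuE j * fE r (l - j)

lemma tsum_nuE : ∑' j : ℕ, nuE j = 1 := by
  rw [← tsum_qE, ← (Equiv.sigmaFiberEquiv gN).tsum_eq qE, ENNReal.tsum_sigma']
  exact tsum_congr fun j => tsum_congr fun b => rfl

lemma nuE_le_one (j : ℕ) : nuE j ≤ 1 := by
  rw [← tsum_nuE]
  exact ENNReal.le_tsum j

lemma fE_le_one : ∀ (m j : ℕ), fE m j ≤ 1
  | 0, j => by unfold fE; split <;> norm_num
  | m+1, j => by
      show (∑ i ∈ Finset.range (j + 1), nuE i * fE m (j - i)) ≤ 1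
      calc ∑ i ∈ Finset.range (j + 1), nuE i * fE m (j - i)
          ≤ ∑ i ∈ Finset.range (j + 1), nuE i * 1 := by
            gcongr with i hi
            exact fE_le_one m (j - i)
        _ = ∑ i ∈ Finset.range (j + 1), nuE i := by simp
        _ ≤ ∑' i : ℕ, nuE i := ENNReal.sum_le_tsum _
        _ = 1 := tsum_nuE

lemma nuE_ne_top (j : ℕ) : nuE j ≠ ⊤ := (lt_of_le_of_lt (nuE_le_one j) (by norm_num)).ne
lemma fE_ne_top (m j : ℕ) : fE m j ≠ ⊤ := (lt_of_le_of_lt (fE_le_one m j) (by norm_num)).ne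

/-! ### The decomposition equivalence -/

def treeDecomp (c : ℕ) : BinaryTree Unit ≃
    Σ τ : BinaryTree Unit, {L : List (BinaryTree Unit × BinaryTree Unit) //
      excOK (c : ℤ) τ ∧ L.length = countLabel (c : ℤ) 0 τ} where
  toFun t := ⟨splitT c t, ⟨splitL c t, excOK_splitT t c, splitL_length t c⟩⟩
  invFun σ := (joinT c σ.1 σ.2.1).1
  left_inv t := by
    have h := joinT_splitT t c []
    rw [List.append_nil] at h
    simp [h]
  right_inv := by
    rintro ⟨τ, L, hOK, hL⟩
    obtain ⟨h1, h2, -⟩ := splitT_joinT τ c L hOK (le_of_eq hL.symm)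
    dsimp only
    refine Sigma.ext h1 ?_
    refine (Subtype.heq_iff_coe_eq ?_).mpr ?_
    · intro x; simp [h1]
    · dsimp only
      rw [h2, ← hL, List.take_length]

lemma LW_nil : LW [] = 1 := by simp [LW]

lemma LW_cons (p : BinaryTree Unit × BinaryTree Unit) (L : List (BinaryTree Unit × BinaryTree Unit)) :
    LW (p :: L) = qE p * LW L := by simp [LW]

lemma LW_pow : ∀ L : List (BinaryTree Unit × BinaryTree Unit),
    LW L = (1/4 : ℝ≥0∞) ^ (L.length + (L.map (fun p => p.1.numNodes + p.2.numNodes)).sum)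
  | [] => by simp [LW]
  | p :: L => by
      rw [LW_cons, LW_pow L]
      have hq : qE p = (1/4 : ℝ≥0∞) ^ (1 + (p.1.numNodes + p.2.numNodes)) := by
        simp only [qE, wE, pow_add, pow_one]
        ring
      rw [hq, ← pow_add]
      congr 1
      simp only [List.length_cons, List.map_cons, List.sum_cons]
      omega

lemma wE_split (t : BinaryTree Unit) (c : ℕ) :
    wE t = PiE (c : ℤ) (splitT c t) * LW (splitL c t) := by
  rw [wE, numNodes_splitT t c, LW_pow, PiE, ← pow_add]
  congr 1
  omega

/-- Cons equivalence for lists of fixed length. -/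
def consEquiv (m : ℕ) :
    (BinaryTree Unit × BinaryTree Unit) × {L : List (BinaryTree Unit × BinaryTree Unit) // L.length = m}
      ≃ {L : List (BinaryTree Unit × BinaryTree Unit) // L.length = m + 1} where
  toFun x := ⟨x.1 :: x.2.1, by simp [x.2.2]⟩
  invFun L := match L with
    | ⟨[], h⟩ => absurd h (by simp)
    | ⟨p :: L', h⟩ => (p, ⟨L', by simpa using h⟩)
  left_inv := by rintro ⟨p, ⟨L, h⟩⟩; rfl
  right_inv := by
    rintro ⟨L, h⟩
    match L, h with
    | p :: L', h => rfl

lemma sum_LW : ∀ m : ℕ, ∑' L : {L : List (BinaryTree Unit × BinaryTree Unit) // L.length = m}, LW L.1 = 1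
  | 0 => by
      rw [tsum_eq_single (⟨[], rfl⟩ : {L : List (BinaryTree Unit × BinaryTree Unit) // L.length = 0})]
      · exact LW_nil
      · rintro ⟨L, hL⟩ hne
        exact absurd (Subtype.ext (List.length_eq_zero_iff.mp hL)) hne
  | m+1 => by
      rw [← (consEquiv m).tsum_eq (fun L => LW L.1)]
      have : ∀ x : (BinaryTree Unit × BinaryTree Unit) × {L : List (BinaryTree Unit × BinaryTree Unit) // L.length = m},
          LW ((consEquiv m x).1) = qE x.1 * LW x.2.1 := by
        rintro ⟨p, ⟨L, hL⟩⟩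
        exact LW_cons p L
      rw [tsum_congr this, ENNReal.tsum_prod']
      have h2 : ∀ a, (∑' b : {L : List (BinaryTree Unit × BinaryTree Unit) // L.length = m},
          qE a * LW b.1) = qE a * 1 := by
        intro a
        rw [ENNReal.tsum_mul_left, sum_LW m]
      rw [tsum_congr h2]
      simp only [mul_one]
      exact tsum_qE

open Classical in
noncomputable def ind (P : Prop) (x : ℝ≥0∞) : ℝ≥0∞ := if P then x else 0

lemma ind_pos {P : Prop} (h : P) (x : ℝ≥0∞) : ind P x = x := by simp [ind, h]

lemma ind_neg {P : Prop} (h : ¬P) (x : ℝ≥0∞) : ind P x = 0 := by simp [ind, h]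

lemma ind_zero (P : Prop) : ind P 0 = 0 := by by_cases h : P <;> simp [ind, h]

lemma ind_congr {P Q : Prop} (h : P ↔ Q) (x : ℝ≥0∞) : ind P x = ind Q x := by
  by_cases hP : P
  · rw [ind_pos hP, ind_pos (h.mp hP)]
  · rw [ind_neg hP, ind_neg (fun hq => hP (h.mpr hq))]

lemma ind_mul (P : Prop) (a x : ℝ≥0∞) : ind P (a * x) = a * ind P x := by
  by_cases h : P <;> simp [ind, h]

lemma sum_LW_cond : ∀ m j : ℕ,
    ∑' L : {L : List (BinaryTree Unit × BinaryTree Unit) // L.length = m},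
      ind ((L.1.map gN).sum = j) (LW L.1) = fE m j
  | 0, j => by
      rw [tsum_eq_single (⟨[], rfl⟩ : {L : List (BinaryTree Unit × BinaryTree Unit) // L.length = 0})]
      · show ind ((([] : List (BinaryTree Unit × BinaryTree Unit)).map gN).sum = j) (LW []) = fE 0 j
        rw [LW_nil]
        unfold fE
        by_cases h : j = 0 <;> simp [ind, h, eq_comm]
      · rintro ⟨L, hL⟩ hne
        exact absurd (Subtype.ext (List.length_eq_zero_iff.mp hL)) hne
  | m+1, j => by
      rw [← (consEquiv m).tsum_eq
        (fun L => ind ((L.1.map gN).sum = j) (LW L.1))]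
      have hterm : ∀ x : (BinaryTree Unit × BinaryTree Unit) × {L : List (BinaryTree Unit × BinaryTree Unit) // L.length = m},
          ind (((((consEquiv m x).1 : List (BinaryTree Unit × BinaryTree Unit))).map gN).sum = j)
              (LW ((consEquiv m x).1))
            = qE x.1 * ind (gN x.1 + (x.2.1.map gN).sum = j) (LW x.2.1) := by
        rintro ⟨p, ⟨L, hL⟩⟩
        show ind ((((p :: L)).map gN).sum = j) (LW (p :: L)) = _
        simp only [List.map_cons, List.sum_cons, LW_cons]
        rw [ind_mul]
      rw [tsum_congr hterm, ENNReal.tsum_prod']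
      have hinner : ∀ a : BinaryTree Unit × BinaryTree Unit,
          (∑' b : {L : List (BinaryTree Unit × BinaryTree Unit) // L.length = m},
            qE a * ind (gN a + (b.1.map gN).sum = j) (LW b.1))
          = qE a * ind (gN a ≤ j) (fE m (j - gN a)) := by
        intro a
        rw [ENNReal.tsum_mul_left]
        congr 1
        by_cases hga : gN a ≤ j
        · rw [ind_pos hga, ← sum_LW_cond m (j - gN a)]
          apply tsum_congr
          intro b
          exact ind_congr (by omega) _
        · rw [ind_neg hga]
          have h0 : ∀ b : {L : List (BinaryTree Unit × BinaryTree Unit) // L.length = m},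
              ind (gN a + (b.1.map gN).sum = j) (LW b.1) = 0 :=
            fun b => ind_neg (by omega) _
          rw [tsum_congr h0]
          exact tsum_zero
      rw [tsum_congr hinner]
      rw [← (Equiv.sigmaFiberEquiv gN).tsum_eq
        (fun a => qE a * ind (gN a ≤ j) (fE m (j - gN a)))]
      rw [ENNReal.tsum_sigma']
      have hfib : ∀ i : ℕ, (∑' p : {p : BinaryTree Unit × BinaryTree Unit // gN p = i},
          qE ((Equiv.sigmaFiberEquiv gN) ⟨i, p⟩)
            * ind (gN ((Equiv.sigmaFiberEquiv gN) ⟨i, p⟩) ≤ j)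
                (fE m (j - gN ((Equiv.sigmaFiberEquiv gN) ⟨i, p⟩))))
          = nuE i * ind (i ≤ j) (fE m (j - i)) := by
        intro i
        have hcg : ∀ p : {p : BinaryTree Unit × BinaryTree Unit // gN p = i},
            qE ((Equiv.sigmaFiberEquiv gN) ⟨i, p⟩)
              * ind (gN ((Equiv.sigmaFiberEquiv gN) ⟨i, p⟩) ≤ j)
                  (fE m (j - gN ((Equiv.sigmaFiberEquiv gN) ⟨i, p⟩)))
            = qE p.1 * ind (i ≤ j) (fE m (j - i)) := by
          rintro ⟨p, hp⟩
          simp only [Equiv.sigmaFiberEquiv, Equiv.coe_fn_mk, hp]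
        rw [tsum_congr hcg, ENNReal.tsum_mul_right, nuE]
      rw [tsum_congr hfib]
      rw [tsum_eq_sum (s := Finset.range (j + 1)) (by
        intro i hi
        simp only [Finset.mem_range] at hi
        rw [ind_neg (by omega), mul_zero])]
      show _ = fE (m+1) j
      simp only [fE]
      refine Finset.sum_congr rfl fun i hi => ?_
      simp only [Finset.mem_range] at hi
      rw [ind_pos (by omega)]

/-! ### Core decomposition lemmas -/

lemma core_cond (c : ℕ) (Q : BinaryTree Unit → Prop) (j : ℕ) :
    ∑' t : BinaryTree Unit, ind (Q (splitT c t) ∧ ((splitL c t).map gN).sum = j) (wE t)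
      = ∑' τ : BinaryTree Unit,
          ind (excOK (c : ℤ) τ ∧ Q τ) (PiE (c : ℤ) τ * fE (countLabel (c : ℤ) 0 τ) j) := by
  rw [← (treeDecomp c).symm.tsum_eq
    (fun t => ind (Q (splitT c t) ∧ ((splitL c t).map gN).sum = j) (wE t))]
  rw [ENNReal.tsum_sigma']
  apply tsum_congr
  intro τ
  by_cases hOK : excOK (c : ℤ) τ
  · have hiff : ∀ L : List (BinaryTree Unit × BinaryTree Unit),
        (L.length = countLabel (c : ℤ) 0 τ) ↔
          (excOK (c : ℤ) τ ∧ L.length = countLabel (c : ℤ) 0 τ) :=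
      fun L => (and_iff_right hOK).symm
    rw [← (Equiv.subtypeEquivRight hiff).tsum_eq]
    have hterm : ∀ Ls : {L : List (BinaryTree Unit × BinaryTree Unit) // L.length = countLabel (c : ℤ) 0 τ},
        (fun σ : (Σ τ' : BinaryTree Unit, {L : List (BinaryTree Unit × BinaryTree Unit) //
            excOK (c : ℤ) τ' ∧ L.length = countLabel (c : ℤ) 0 τ'}) =>
          (fun t => ind (Q (splitT c t) ∧ ((splitL c t).map gN).sum = j) (wE t))
            ((treeDecomp c).symm σ)) ⟨τ, (Equiv.subtypeEquivRight hiff) Ls⟩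
        = ind (Q τ ∧ (Ls.1.map gN).sum = j) (PiE (c : ℤ) τ * LW Ls.1) := by
      rintro ⟨L, hL⟩
      show ind (Q (splitT c (joinT c τ L).1) ∧ ((splitL c (joinT c τ L).1).map gN).sum = j)
          (wE (joinT c τ L).1) = _
      obtain ⟨hs1, hs2, -⟩ := splitT_joinT τ c L hOK (le_of_eq hL.symm)
      have hs2' : splitL c (joinT c τ L).1 = L := by
        rw [hs2, ← hL, List.take_length]
      rw [wE_split ((joinT c τ L).1) c, hs1, hs2']
    rw [tsum_congr hterm]
    by_cases hQ : Q τ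
    · rw [ind_pos ⟨hOK, hQ⟩]
      have h2 : ∀ Ls : {L : List (BinaryTree Unit × BinaryTree Unit) // L.length = countLabel (c : ℤ) 0 τ},
          ind (Q τ ∧ (Ls.1.map gN).sum = j) (PiE (c : ℤ) τ * LW Ls.1)
            = PiE (c : ℤ) τ * ind ((Ls.1.map gN).sum = j) (LW Ls.1) := by
        intro Ls
        rw [← ind_mul]
        exact ind_congr (and_iff_right hQ) _
      rw [tsum_congr h2, ENNReal.tsum_mul_left, sum_LW_cond]
    · rw [ind_neg (fun h => hQ h.2)]
      have h2 : ∀ Ls : {L : List (BinaryTree Unit × BinaryTree Unit) // L.length = countLabel (c : ℤ) 0 τ},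
          ind (Q τ ∧ (Ls.1.map gN).sum = j) (PiE (c : ℤ) τ * LW Ls.1) = 0 :=
        fun Ls => ind_neg (fun h => hQ h.1) _
      rw [tsum_congr h2, tsum_zero]
  · haveI : IsEmpty {L : List (BinaryTree Unit × BinaryTree Unit) //
        excOK (c : ℤ) τ ∧ L.length = countLabel (c : ℤ) 0 τ} := ⟨fun Ls => hOK Ls.2.1⟩
    rw [tsum_empty, ind_neg (fun h => hOK h.1)]

lemma core_plain (c : ℕ) (Q : BinaryTree Unit → Prop) :
    ∑' t : BinaryTree Unit, ind (Q (splitT c t)) (wE t)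
      = ∑' τ : BinaryTree Unit, ind (excOK (c : ℤ) τ ∧ Q τ) (PiE (c : ℤ) τ) := by
  rw [← (treeDecomp c).symm.tsum_eq (fun t => ind (Q (splitT c t)) (wE t))]
  rw [ENNReal.tsum_sigma']
  apply tsum_congr
  intro τ
  by_cases hOK : excOK (c : ℤ) τ
  · have hiff : ∀ L : List (BinaryTree Unit × BinaryTree Unit),
        (L.length = countLabel (c : ℤ) 0 τ) ↔
          (excOK (c : ℤ) τ ∧ L.length = countLabel (c : ℤ) 0 τ) :=
      fun L => (and_iff_right hOK).symm
    rw [← (Equiv.subtypeEquivRight hiff).tsum_eq]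
    have hterm : ∀ Ls : {L : List (BinaryTree Unit × BinaryTree Unit) // L.length = countLabel (c : ℤ) 0 τ},
        (fun σ : (Σ τ' : BinaryTree Unit, {L : List (BinaryTree Unit × BinaryTree Unit) //
            excOK (c : ℤ) τ' ∧ L.length = countLabel (c : ℤ) 0 τ'}) =>
          (fun t => ind (Q (splitT c t)) (wE t))
            ((treeDecomp c).symm σ)) ⟨τ, (Equiv.subtypeEquivRight hiff) Ls⟩
        = ind (Q τ) (PiE (c : ℤ) τ * LW Ls.1) := by
      rintro ⟨L, hL⟩
      show ind (Q (splitT c (joinT c τ L).1)) (wE (joinT c τ L).1) = _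
      obtain ⟨hs1, hs2, -⟩ := splitT_joinT τ c L hOK (le_of_eq hL.symm)
      have hs2' : splitL c (joinT c τ L).1 = L := by
        rw [hs2, ← hL, List.take_length]
      rw [wE_split ((joinT c τ L).1) c, hs1, hs2']
    rw [tsum_congr hterm]
    by_cases hQ : Q τ
    · rw [ind_pos ⟨hOK, hQ⟩]
      have h2 : ∀ Ls : {L : List (BinaryTree Unit × BinaryTree Unit) // L.length = countLabel (c : ℤ) 0 τ},
          ind (Q τ) (PiE (c : ℤ) τ * LW Ls.1) = PiE (c : ℤ) τ * LW Ls.1 :=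
        fun Ls => ind_pos hQ _
      rw [tsum_congr h2, ENNReal.tsum_mul_left, sum_LW, mul_one]
    · rw [ind_neg (fun h => hQ h.2)]
      have h2 : ∀ Ls : {L : List (BinaryTree Unit × BinaryTree Unit) // L.length = countLabel (c : ℤ) 0 τ},
          ind (Q τ) (PiE (c : ℤ) τ * LW Ls.1) = 0 := fun Ls => ind_neg hQ _
      rw [tsum_congr h2, tsum_zero]
  · haveI : IsEmpty {L : List (BinaryTree Unit × BinaryTree Unit) //
        excOK (c : ℤ) τ ∧ L.length = countLabel (c : ℤ) 0 τ} := ⟨fun Ls => hOK Ls.2.1⟩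
    rw [tsum_empty, ind_neg (fun h => hOK h.1)]

/-! ### Conversions between ℝ≥0∞ and ℝ, and assembly -/

lemma weight_eq_toReal (t : BinaryTree Unit) : weight t = (weightE t).toReal := by
  unfold weight weightE
  split
  · rw [wE, ENNReal.toReal_pow]; norm_num
  · simp

lemma PiE_ne_top (c : ℤ) (τ : BinaryTree Unit) : PiE c τ ≠ ⊤ := ENNReal.pow_ne_top (by norm_num)

lemma Piplus_eq_toReal (t : BinaryTree Unit) : Piplus t = (PiE 1 t).toReal := by
  rw [Piplus, PiE, ENNReal.toReal_pow]; norm_num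

lemma Pi0_eq_toReal (S : Set (BinaryTree Unit)) :
    Pi0 S = (∑' t : S, weightE t.1).toReal :=
  calc Pi0 S = ∑' t : S, weight t.1 := rfl
    _ = ∑' t : S, (weightE t.1).toReal := tsum_congr fun (t : S) => weight_eq_toReal t.1
    _ = (∑' t : S, weightE t.1).toReal :=
        (ENNReal.tsum_toReal_eq (fun (t : ↥S) => weightE_ne_top t.1)).symm

lemma nu_eq_toReal (j : ℕ) :
    nu j = (∑' τ : {t : BinaryTree Unit // IsExc t ∧ nZero t = j}, PiE 1 τ.1).toReal :=
  calc nu j = ∑' τ : {t : BinaryTree Unit // IsExc t ∧ nZero t = j}, Piplus τ.1 := rfl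
    _ = ∑' τ : {t : BinaryTree Unit // IsExc t ∧ nZero t = j}, (PiE 1 τ.1).toReal :=
        tsum_congr fun (τ : {t : BinaryTree Unit // IsExc t ∧ nZero t = j}) => Piplus_eq_toReal τ.1
    _ = (∑' τ : {t : BinaryTree Unit // IsExc t ∧ nZero t = j}, PiE 1 τ.1).toReal :=
        (ENNReal.tsum_toReal_eq (fun (τ : {t : BinaryTree Unit // IsExc t ∧ nZero t = j}) => PiE_ne_top 1 τ.1)).symm

lemma tsum_set_ind (S : Set (BinaryTree Unit)) (F : BinaryTree Unit → ℝ≥0∞) :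
    ∑' t : S, F t.1 = ∑' t : BinaryTree Unit, ind (t ∈ S) (F t) := by
  rw [tsum_subtype S F]
  refine tsum_congr fun t => ?_
  by_cases h : t ∈ S
  · rw [Set.indicator_of_mem h, ind_pos h]
  · rw [Set.indicator_of_notMem h, ind_neg h]

lemma tsum_sub_ind {α : Type*} (P : α → Prop) (F : α → ℝ≥0∞) :
    ∑' t : {t : α // P t}, F t.1 = ∑' t : α, ind (P t) (F t) := by
  have h := tsum_subtype_eq_of_support_subset
      (f := fun t => ind (P t) (F t)) (s := {t | P t}) (by
    intro t ht
    simp only [Function.mem_support] at ht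
    simp only [Set.mem_setOf_eq]
    by_contra hP
    rw [ind_neg hP] at ht
    exact ht rfl)
  rw [← h]
  exact tsum_congr fun t => (ind_pos t.2 (F t.1)).symm

lemma weightE_ind (P : Prop) (t : BinaryTree Unit) :
    ind P (weightE t) = ind (t ≠ BinaryTree.nil ∧ P) (wE t) := by
  cases t with
  | nil =>
      have h1 : weightE BinaryTree.nil = 0 := by simp [weightE, isNode]
      rw [h1, ind_zero, ind_neg (fun h => h.1 rfl)]
  | node v l r =>
      have h1 : weightE (BinaryTree.node v l r) = wE (BinaryTree.node v l r) := by simp [weightE, isNode]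
      rw [h1]
      exact ind_congr (by simp) _

lemma partIE (j : ℕ) :
    ∑' t : BinaryTree Unit, ind (t ≠ BinaryTree.nil ∧ Nhit 1 t = j) (wE t)
      = ∑' τ : BinaryTree Unit, ind (IsExc τ ∧ nZero τ = j) (PiE 1 τ) := by
  have h1 : ∀ t, ind (t ≠ BinaryTree.nil ∧ Nhit 1 t = j) (wE t)
      = ind ((fun τ => τ ≠ BinaryTree.nil ∧ countLabel ((1:ℕ):ℤ) 0 τ = j) (splitT 1 t)) (wE t) := by
    intro t
    refine ind_congr ?_ _
    have key : Nhit 1 t = fhU 1 (splitT 1 t) := by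
      rw [Nhit_eq_fhD]; exact fhD_eq_fhU_splitT t 1 1 le_rfl le_rfl
    have key2 : fhU 1 (splitT 1 t) = countLabel ((1:ℕ):ℤ) 0 (splitT 1 t) :=
      excOK_fhU (splitT 1 t) 1 (excOK_splitT t 1)
    constructor
    · rintro ⟨hn, h2⟩
      exact ⟨by rwa [Ne, splitT_eq_nil_iff], by rw [← key2, ← key]; exact h2⟩
    · rintro ⟨hn, h2⟩
      exact ⟨by rwa [Ne, splitT_eq_nil_iff] at hn, by rw [key, key2]; exact h2⟩
  rw [tsum_congr h1, core_plain 1 (fun τ => τ ≠ BinaryTree.nil ∧ countLabel ((1:ℕ):ℤ) 0 τ = j)]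
  refine tsum_congr fun τ => ?_
  rw [show ((1:ℕ):ℤ) = (1:ℤ) from Nat.cast_one]
  refine ind_congr ?_ _
  unfold IsExc nZero
  tauto

lemma nuE_eq (j : ℕ) :
    nuE j = ∑' τ : {t : BinaryTree Unit // IsExc t ∧ nZero t = j}, PiE 1 τ.1 := by
  have h0 : nuE j = ∑' p : BinaryTree Unit × BinaryTree Unit, ind (gN p = j) (qE p) :=
    tsum_sub_ind _ _
  have h1 : ∑' t : BinaryTree Unit, ind (t ≠ BinaryTree.nil ∧ Nhit 1 t = j) (wE t)
      = ∑' p : BinaryTree Unit × BinaryTree Unit, ind (gN p = j) (qE p) := by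
    rw [tsum_tree (fun t => ind (t ≠ BinaryTree.nil ∧ Nhit 1 t = j) (wE t))]
    rw [ind_neg (fun h => h.1 rfl), zero_add]
    refine tsum_congr fun p => ?_
    rw [wE_node () p.1 p.2]
    refine ind_congr ?_ _
    rw [Nhit_one_node]
    simp
  rw [h0, ← h1, partIE, tsum_sub_ind]

lemma nu_eq_nuE (j : ℕ) : nu j = (nuE j).toReal := by
  rw [nu_eq_toReal, nuE_eq]

lemma f_eq : ∀ (m j : ℕ), f m j = (fE m j).toReal
  | 0, j => by
      unfold f fE
      by_cases h : j = 0 <;> simp [h]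
  | m+1, j => by
      show (∑ i ∈ Finset.range (j + 1), nu i * f m (j - i)) = _
      rw [show fE (m+1) j = ∑ i ∈ Finset.range (j + 1), nuE i * fE m (j - i) from rfl]
      rw [ENNReal.toReal_sum (fun i _ => ENNReal.mul_ne_top (nuE_ne_top i) (fE_ne_top m (j - i)))]
      refine Finset.sum_congr rfl fun i _ => ?_
      rw [ENNReal.toReal_mul, f_eq m (j - i), nu_eq_nuE i]

lemma partI (j : ℕ) : Pi0 {t | Nhit 1 t = j} = nu j := by
  rw [Pi0_eq_toReal, nu_eq_toReal]
  congr 1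
  calc ∑' t : ↥{t : BinaryTree Unit | Nhit 1 t = j}, weightE t.1
      = ∑' t : BinaryTree Unit, ind (t ∈ {t : BinaryTree Unit | Nhit 1 t = j}) (weightE t) :=
        tsum_set_ind _ _
    _ = ∑' t : BinaryTree Unit, ind (t ≠ BinaryTree.nil ∧ Nhit 1 t = j) (wE t) := by
        refine tsum_congr fun t => ?_
        rw [weightE_ind]
        exact ind_congr (by simp [Set.mem_setOf_eq, and_comm]) _
    _ = ∑' τ : BinaryTree Unit, ind (IsExc τ ∧ nZero τ = j) (PiE 1 τ) := partIE j
    _ = ∑' τ : {t : BinaryTree Unit // IsExc t ∧ nZero t = j}, PiE 1 τ.1 :=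
        (tsum_sub_ind _ _).symm

lemma partII (k : ℕ) (hk : 1 ≤ k) (n : ℕ → ℕ) (j : ℕ) :
    Pi0 ({t | Nhit (k + 1) t = j} ∩ {t | ∀ i, 1 ≤ i → i ≤ k → Nhit i t = n i})
      = f (n k) j * Pi0 {t | ∀ i, 1 ≤ i → i ≤ k → Nhit i t = n i} := by
  have key : ∀ (t : BinaryTree Unit) (i : ℕ), 1 ≤ i → i ≤ k → Nhit i t = fhU i (splitT k t) := by
    intro t i h1 h2
    rw [Nhit_eq_fhD]; exact fhD_eq_fhU_splitT t k i h1 h2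
  have hQsplit : ∀ t : BinaryTree Unit,
      (t ≠ BinaryTree.nil ∧ ∀ i, 1 ≤ i → i ≤ k → Nhit i t = n i) ↔
        (fun τ => τ ≠ BinaryTree.nil ∧ ∀ i, 1 ≤ i → i ≤ k → fhU i τ = n i) (splitT k t) := by
    intro t
    constructor
    · rintro ⟨h1, h2⟩
      refine ⟨by rwa [Ne, splitT_eq_nil_iff], fun i hi hik => ?_⟩
      rw [← key t i hi hik]; exact h2 i hi hik
    · rintro ⟨h1, h2⟩
      refine ⟨by rwa [Ne, splitT_eq_nil_iff] at h1, fun i hi hik => ?_⟩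
      rw [key t i hi hik]; exact h2 i hi hik
  have hsum : ∀ t : BinaryTree Unit, Nhit (k + 1) t = ((splitL k t).map gN).sum := by
    intro t
    rw [Nhit_eq_fhD]; exact fhD_splitL t k
  rw [Pi0_eq_toReal, Pi0_eq_toReal]
  have hL : (∑' t : ↥({t | Nhit (k + 1) t = j} ∩ {t | ∀ i, 1 ≤ i → i ≤ k → Nhit i t = n i}),
        weightE t.1)
      = fE (n k) j * (∑' t : ↥{t : BinaryTree Unit | ∀ i, 1 ≤ i → i ≤ k → Nhit i t = n i},
        weightE t.1) := by
    rw [tsum_set_ind, tsum_set_ind]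
    have h1 : ∀ t : BinaryTree Unit,
        ind (t ∈ ({t | Nhit (k + 1) t = j} ∩ {t | ∀ i, 1 ≤ i → i ≤ k → Nhit i t = n i}))
          (weightE t)
        = ind ((fun τ => τ ≠ BinaryTree.nil ∧ ∀ i, 1 ≤ i → i ≤ k → fhU i τ = n i) (splitT k t)
            ∧ ((splitL k t).map gN).sum = j) (wE t) := by
      intro t
      rw [weightE_ind]
      refine ind_congr ?_ _
      simp only [Set.mem_inter_iff, Set.mem_setOf_eq]
      constructor
      · rintro ⟨hne, hj, hall⟩
        exact ⟨(hQsplit t).mp ⟨hne, hall⟩, by rw [← hsum t]; exact hj⟩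
      · rintro ⟨hq, hj⟩
        have h := (hQsplit t).mpr hq
        exact ⟨h.1, ⟨by rw [hsum t]; exact hj, h.2⟩⟩
    have h2 : ∀ t : BinaryTree Unit,
        ind (t ∈ {t : BinaryTree Unit | ∀ i, 1 ≤ i → i ≤ k → Nhit i t = n i}) (weightE t)
        = ind ((fun τ => τ ≠ BinaryTree.nil ∧ ∀ i, 1 ≤ i → i ≤ k → fhU i τ = n i) (splitT k t))
            (wE t) := by
      intro t
      rw [weightE_ind]
      refine ind_congr ?_ _
      simp only [Set.mem_setOf_eq]
      exact hQsplit t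
    rw [tsum_congr h1, core_cond k (fun τ => τ ≠ BinaryTree.nil ∧ ∀ i, 1 ≤ i → i ≤ k → fhU i τ = n i) j,
      tsum_congr h2, core_plain k (fun τ => τ ≠ BinaryTree.nil ∧ ∀ i, 1 ≤ i → i ≤ k → fhU i τ = n i)]
    rw [← ENNReal.tsum_mul_left]
    refine tsum_congr fun τ => ?_
    by_cases h : excOK ((k : ℕ) : ℤ) τ
        ∧ (τ ≠ BinaryTree.nil ∧ ∀ i, 1 ≤ i → i ≤ k → fhU i τ = n i)
    · rw [ind_pos h, ind_pos h]
      have hz : countLabel ((k : ℕ) : ℤ) 0 τ = n k := by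
        rw [← excOK_fhU τ k h.1]
        exact h.2.2 k hk le_rfl
      rw [hz, mul_comm (PiE ((k : ℕ) : ℤ) τ) _]
    · rw [ind_neg h, ind_neg h, mul_zero]
  rw [hL, ENNReal.toReal_mul, f_eq]

/-- Under `Π₀`, the process `(N_k)_{k ≥ 1}` is a Galton–Watson process with offspring
distribution `ν` started from one individual. -/
theorem Nhit_galton_watson :
    (∀ j : ℕ, Pi0 {t | Nhit 1 t = j} = nu j) ∧
    (∀ k : ℕ, 1 ≤ k → ∀ n : ℕ → ℕ, ∀ j : ℕ,
      Pi0 ({t | Nhit (k + 1) t = j} ∩ {t | ∀ i, 1 ≤ i → i ≤ k → Nhit i t = n i})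
        = f (n k) j * Pi0 {t | ∀ i, 1 ≤ i → i ≤ k → Nhit i t = n i}) :=
  ⟨partI, partII⟩

end VEP
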